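/- arXiv:2112.11893 — 5 statements merged into one kernel-verified Lean document; each statement's English description precedes it below -/
import Mathlib

section
/- Let H_0 ⊂ R^d/R·1 be the tropical hyperplane consisting of points x where the maximum of {x_1,...,x_d} is attained at least twice. Then for any x ∈ R^d, the tropical distance from x to H_0 equals the difference between the maximum and the second maximum of the coordinates x_1,...,x_d. -/
/-- The tropical (generalized Hilbert projective) distance on `ℝ^d`. -/
noncomputable def dtr {d : ℕ} [NeZero d] (v w : Fin d → ℝ) : ℝ :=
  Finset.univ.sup' Finset.univ_nonempty (fun i => v i - w i) -
  Finset.univ.inf' Finset.univ_nonempty (fun i => v i - w i)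

/-- The second maximum of `x₁,…,x_d` (the largest value after removing one
occurrence of the maximum), expressed as `max_{i<j} min(x_i,x_j)`. -/
noncomputable def secondMax {d : ℕ}
    (hne : (Finset.univ.filter (fun p : Fin d × Fin d => p.1 < p.2)).Nonempty)
    (x : Fin d → ℝ) : ℝ :=
  (Finset.univ.filter (fun p : Fin d × Fin d => p.1 < p.2)).sup' hne
    (fun p => min (x p.1) (x p.2))

/-- The tropical hyperplane `H₀`: points whose maximum coordinate is attained
at least twice. -/
def H0 (d : ℕ) : Set (Fin d → ℝ) :=
  {y | ∃ i j : Fin d, i ≠ j ∧ y i = y j ∧ ∀ k, y k ≤ y i}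

/-- The tropical distance from a point `x ∈ ℝ^d` to the tropical hyperplane `H₀`
equals the maximum minus the second maximum of the coordinates of `x`. -/
theorem stmt3 {d : ℕ} [NeZero d] (hd : 2 ≤ d) (x : Fin d → ℝ)
    (hne : (Finset.univ.filter (fun p : Fin d × Fin d => p.1 < p.2)).Nonempty) :
    sInf ((fun y => dtr x y) '' H0 d) =
      Finset.univ.sup' Finset.univ_nonempty x - secondMax hne x := by
  classical
  set M := Finset.univ.sup' Finset.univ_nonempty x with hM
  set S := secondMax hne x with hS
  obtain ⟨i, -, hi⟩ := Finset.exists_mem_eq_sup' (Finset.univ_nonempty) x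
  rw [← hM] at hi
  have hxM : ∀ k, x k ≤ M := fun k => Finset.le_sup' x (Finset.mem_univ k)
  have hxi : ∀ k, x k ≤ x i := fun k => hi ▸ hxM k
  -- every coordinate other than i is ≤ S
  have hA : ∀ k, k ≠ i → x k ≤ S := by
    intro k hk
    rcases lt_or_gt_of_ne hk with h | h
    · have hmem : (k, i) ∈ Finset.univ.filter (fun p : Fin d × Fin d => p.1 < p.2) := by
        simp [h]
      have h2 : min (x k) (x i) ≤ S := Finset.le_sup' (fun p : Fin d × Fin d => min (x p.1) (x p.2)) hmem
      exact (min_eq_left (hxi k)).symm.trans_le h2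
    · have hmem : (i, k) ∈ Finset.univ.filter (fun p : Fin d × Fin d => p.1 < p.2) := by
        simp [h]
      have h2 : min (x i) (x k) ≤ S := Finset.le_sup' (fun p : Fin d × Fin d => min (x p.1) (x p.2)) hmem
      exact (min_eq_right (hxi k)).symm.trans_le h2
  have hSM : S ≤ M := by
    rw [hS]
    apply Finset.sup'_le
    intro p _
    exact le_trans (min_le_left _ _) (hxM p.1)
  -- there is j ≠ i with x j = S
  obtain ⟨p, hp, hpS⟩ := Finset.exists_mem_eq_sup' hne
    (fun p : Fin d × Fin d => min (x p.1) (x p.2))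
  have hp12 : p.1 < p.2 := (Finset.mem_filter.mp hp).2
  have hpS' : S = min (x p.1) (x p.2) := hpS
  obtain ⟨j, hji, hjS⟩ : ∃ j, j ≠ i ∧ x j = S := by
    by_cases h1 : p.1 = i
    · refine ⟨p.2, fun h => absurd (h1 ▸ h ▸ hp12) (lt_irrefl _), ?_⟩
      exact le_antisymm (hA p.2 (fun h => absurd (h1 ▸ h ▸ hp12) (lt_irrefl _)))
        (hpS'.le.trans (min_le_right _ _))
    · exact ⟨p.1, h1, le_antisymm (hA p.1 h1) (hpS'.le.trans (min_le_left _ _))⟩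
  -- lower bound
  have hlb : ∀ z ∈ (fun y => dtr x y) '' H0 d, M - S ≤ z := by
    rintro z ⟨y, ⟨a, b, hab, hyab, hymax⟩, rfl⟩
    obtain ⟨c, hc, hyc⟩ : ∃ c, c ≠ i ∧ y i ≤ y c := by
      by_cases ha : a = i
      · exact ⟨b, fun h => hab (ha.trans h.symm), hyab ▸ hymax i⟩
      · exact ⟨a, ha, hymax i⟩
    have h1 : x i - y i ≤ Finset.univ.sup' Finset.univ_nonempty (fun k => x k - y k) := by
      show (fun k => x k - y k) i ≤ _
      exact Finset.le_sup' (fun k => x k - y k) (Finset.mem_univ i)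
    have h2 : Finset.univ.inf' Finset.univ_nonempty (fun k => x k - y k) ≤ x c - y c := by
      show _ ≤ (fun k => x k - y k) c
      exact Finset.inf'_le (fun k => x k - y k) (Finset.mem_univ c)
    have h3 : x c ≤ S := hA c hc
    have h4 : M = x i := hi
    simp only [dtr]
    linarith
  -- the witness
  set y : Fin d → ℝ := Function.update x i S with hy
  have hyi : y i = S := Function.update_self i S x
  have hyk : ∀ k, k ≠ i → y k = x k := fun k hk => Function.update_of_ne hk S x
  have hyH : y ∈ H0 d := by
    refine ⟨i, j, fun h => hji h.symm, ?_, ?_⟩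
    · rw [hyi, hyk j hji, hjS]
    · intro k
      rw [hyi]
      by_cases hk : k = i
      · rw [hk, hyi]
      · rw [hyk k hk]; exact hA k hk
  have hdtr : dtr x y = M - S := by
    have hsup : Finset.univ.sup' Finset.univ_nonempty (fun k => x k - y k) = M - S := by
      apply le_antisymm
      · apply Finset.sup'_le
        intro k _
        by_cases hk : k = i
        · rw [hk, hyi, hi]
        · rw [hyk k hk]; simp; linarith
      · have h5 : x i - y i ≤ Finset.univ.sup' Finset.univ_nonempty (fun k => x k - y k) := by
          show (fun k => x k - y k) i ≤ _
          exact Finset.le_sup' (fun k => x k - y k) (Finset.mem_univ i)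
        rw [hyi, ← hi] at h5
        exact h5
    have hinf : Finset.univ.inf' Finset.univ_nonempty (fun k => x k - y k) = 0 := by
      apply le_antisymm
      · have h5 : Finset.univ.inf' Finset.univ_nonempty (fun k => x k - y k) ≤ x j - y j := by
          show _ ≤ (fun k => x k - y k) j
          exact Finset.inf'_le (fun k => x k - y k) (Finset.mem_univ j)
        rw [hyk j hji] at h5
        simpa using h5
      · apply Finset.le_inf'
        intro k _
        by_cases hk : k = i
        · rw [hk, hyi, ← hi]; linarith
        · rw [hyk k hk]; simp
    simp only [dtr, hsup, hinf, sub_zero]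
  apply le_antisymm
  · apply csInf_le ⟨M - S, fun z hz => hlb z hz⟩
    exact ⟨y, hyH, hdtr⟩
  · exact le_csInf ⟨dtr x y, ⟨y, hyH, rfl⟩⟩ hlb
end

section
/- Let μ_1, μ_2 ∈ R and ε_1,...,ε_d ∈ R, and let X = (μ_1+ε_1, μ_2+ε_2, ε_3, ..., ε_d). Define X'_i = μ_i·[i≤2] + min(ε*, ε_i), where ε* is the second smallest value among ε_1,...,ε_d. Then for each i, X'_i equals the Blue-Rule expression max_{τ∈[d]\{i}} min_{j∉{τ}} (X_j + p({τ,i}) - p({τ,j})), where p({τ,i}) = μ_τ·[τ≤2] + μ_i·[i≤2]. -/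
/-!
After cancelling the Plücker coordinates, the `i`-th Blue-Rule entry is `μ_i·[i≤2]` plus
`max_{τ≠i} min_{j≠τ} ε_j`. Deleting one index `τ` from a list leaves its minimum unchanged
unless `τ` is the unique argmin, in which case the minimum rises to the second smallest
value `ε*`; since `τ = i` is forbidden, the best choice gives `ε*` when the argmin differs
from `i`, and `ε_i` otherwise, i.e. `min(ε*, ε_i)`.
-/

/-- `m i = μ₁·[i=1] + μ₂·[i=2]` (0-indexed): the mean vector `(μ₁,μ₂,0,…,0)`. -/
noncomputable def meanVec {d : ℕ} (μ₁ μ₂ : ℝ) : Fin d → ℝ := fun i =>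
  if (i : ℕ) = 0 then μ₁ else if (i : ℕ) = 1 then μ₂ else 0

/-- The second smallest value among `ε₁,…,ε_d`, expressed as
`min_{i<j} max(ε_i, ε_j)`. -/
noncomputable def secondMin {d : ℕ}
    (hne : (Finset.univ.filter (fun p : Fin d × Fin d => p.1 < p.2)).Nonempty)
    (ε : Fin d → ℝ) : ℝ :=
  (Finset.univ.filter (fun p : Fin d × Fin d => p.1 < p.2)).inf' hne
    (fun p => max (ε p.1) (ε p.2))

section SecondMin

variable {d : ℕ} (hne : (Finset.univ.filter (fun p : Fin d × Fin d => p.1 < p.2)).Nonempty)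
  (ε : Fin d → ℝ)

theorem secondMin_le_max {a b : Fin d} (hab : a ≠ b) : secondMin hne ε ≤ max (ε a) (ε b) := by
  rcases hab.lt_or_gt with h | h
  · exact Finset.inf'_le _ (Finset.mem_filter.mpr ⟨Finset.mem_univ (a, b), h⟩)
  · rw [max_comm]
    exact Finset.inf'_le _ (Finset.mem_filter.mpr ⟨Finset.mem_univ (b, a), h⟩)

theorem exists_ne_max_eq_secondMin :
    ∃ a b : Fin d, a ≠ b ∧ max (ε a) (ε b) = secondMin hne ε := by
  obtain ⟨p, hp, hpeq⟩ := Finset.exists_mem_eq_inf' hne (fun p => max (ε p.1) (ε p.2))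
  exact ⟨p.1, p.2, (Finset.mem_filter.mp hp).2.ne, hpeq.symm⟩

end SecondMin

-- `hs_le` and `hs_ge` say that `s` is the second smallest value of `f`.
theorem ciSup_ne_ciInf_ne_eq_min {ι α : Type*} [Finite ι] [ConditionallyCompleteLinearOrder α]
    (f : ι → α) (s : α) (hs_le : ∀ a b, a ≠ b → s ≤ max (f a) (f b))
    (hs_ge : ∃ a b, a ≠ b ∧ max (f a) (f b) ≤ s) (i : ι) :
    ⨆ τ : {t // t ≠ i}, ⨅ j : {t // t ≠ (τ : ι)}, f j = min s (f i) := by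
  obtain ⟨a, b, hab, hmax⟩ := hs_ge
  have : Nontrivial ι := nontrivial_of_ne a b hab
  have hne : ∀ τ : ι, Nonempty {t // t ≠ τ} := fun τ => (exists_ne τ).elim fun t ht => ⟨⟨t, ht⟩⟩
  apply le_antisymm
  · refine ciSup_le fun τ => le_min ?_ (ciInf_le_of_le (Finite.bddBelow_range _) ⟨i, τ.2.symm⟩ le_rfl)
    obtain ⟨c, hc, hcs⟩ : ∃ c, c ≠ (τ : ι) ∧ f c ≤ s := by
      by_cases ha : a = τ
      · exact ⟨b, ha ▸ hab.symm, (le_max_right _ _).trans hmax⟩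
      · exact ⟨a, ha, (le_max_left _ _).trans hmax⟩
    exact ciInf_le_of_le (Finite.bddBelow_range _) ⟨c, hc⟩ hcs
  · -- The optimal `τ` is an argmin of `f` away from `i`.
    have := hne i
    obtain ⟨τ, hτ⟩ := Finite.exists_min fun t : {t // t ≠ i} => f t
    have := hne τ
    refine le_ciSup_of_le (Finite.bddAbove_range _) τ (le_ciInf fun j => ?_)
    by_cases hji : (j : ι) = i
    · exact (min_le_right _ _).trans_eq (congrArg f hji.symm)
    · calc min s (f i) ≤ s := min_le_left _ _
        _ ≤ max (f j) (f τ) := hs_le _ _ j.2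
        _ = f j := max_eq_left (hτ ⟨j, hji⟩)

theorem stmt7_general {d : ℕ} (μ₁ μ₂ : ℝ) (ε : Fin d → ℝ)
    (hne : (Finset.univ.filter (fun p : Fin d × Fin d => p.1 < p.2)).Nonempty) :
    ∀ i : Fin d,
      (⨆ τ : {t : Fin d // t ≠ i}, ⨅ j : {t : Fin d // t ≠ (τ : Fin d)},
        ((meanVec μ₁ μ₂ (j : Fin d) + ε (j : Fin d)) +
          (meanVec μ₁ μ₂ (τ : Fin d) + meanVec μ₁ μ₂ i) -
          (meanVec μ₁ μ₂ (τ : Fin d) + meanVec μ₁ μ₂ (j : Fin d)))) =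
      meanVec μ₁ μ₂ i + min (secondMin hne ε) (ε i) := by
  intro i
  set m := meanVec μ₁ μ₂
  have hcancel : ∀ τ j : Fin d, (m j + ε j) + (m τ + m i) - (m τ + m j) = m i + ε j :=
    fun _ _ => by ring
  simp only [hcancel]
  rw [← min_add_add_left]
  obtain ⟨a, b, hab, hmax⟩ := exists_ne_max_eq_secondMin hne ε
  refine ciSup_ne_ciInf_ne_eq_min (fun j => m i + ε j) _ (fun a b hab => ?_) ⟨a, b, hab, ?_⟩ i
  · rw [max_add_add_left]
    exact add_le_add_right (secondMin_le_max hne ε hab) _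
  · rw [max_add_add_left, hmax]

/-- Blue Rule computation for the Plücker coordinates
`p({τ,i}) = μ_τ·[τ≤2] + μ_i·[i≤2]` and the point
`X = (μ₁+ε₁, μ₂+ε₂, ε₃, …, ε_d)`: for each `i`, the Blue-Rule expression
`max_{τ≠i} min_{j≠τ} (X_j + p({τ,i}) - p({τ,j}))` equals
`μ_i·[i≤2] + min(ε*, ε_i)`, where `ε*` is the second smallest of the `ε_j`. -/
theorem stmt7 {d : ℕ} (hd : 2 ≤ d) (μ₁ μ₂ : ℝ) (ε : Fin d → ℝ)
    (hne : (Finset.univ.filter (fun p : Fin d × Fin d => p.1 < p.2)).Nonempty) :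
    ∀ i : Fin d,
      (⨆ τ : {t : Fin d // t ≠ i}, ⨅ j : {t : Fin d // t ≠ (τ : Fin d)},
        ((meanVec μ₁ μ₂ (j : Fin d) + ε (j : Fin d)) +
          (meanVec μ₁ μ₂ (τ : Fin d) + meanVec μ₁ μ₂ i) -
          (meanVec μ₁ μ₂ (τ : Fin d) + meanVec μ₁ μ₂ (j : Fin d)))) =
      meanVec μ₁ μ₂ i + min (secondMin hne ε) (ε i) :=
  stmt7_general μ₁ μ₂ ε hne
end

section
/- Let μ, ν ∈ R^d with μ_i - ν_i ≠ μ_j - ν_j for all i ≠ j. Define P_ij = max(μ_i + ν_j, μ_j + ν_i) for 1 ≤ i < j ≤ d. Then for every triple i < j < k, the maximum of {P_jk + μ_i, P_ik + μ_j, P_ij + μ_k} is attained at least twice, and likewise with μ replaced by ν. That is, both μ and ν lie on the tropical linear space with Plücker coordinates P. -/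
/-- The maximum of three reals is attained at least twice. -/
def maxTwice (a b c : ℝ) : Prop :=
  (a = b ∧ c ≤ a) ∨ (a = c ∧ b ≤ a) ∨ (b = c ∧ a ≤ b)

/-- For `μ, ν ∈ ℝ^d` in general position, the Plücker coordinates
`P_ij = max(μ_i+ν_j, μ_j+ν_i)` define a tropical linear space containing both
`μ` and `ν`: for every triple `i < j < k`, the maxima of
`{P_jk + μ_i, P_ik + μ_j, P_ij + μ_k}` and `{P_jk + ν_i, P_ik + ν_j, P_ij + ν_k}`
are each attained at least twice. -/
theorem stmt12 {d : ℕ} (μ ν : Fin d → ℝ)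
    (hgen : ∀ i j : Fin d, i ≠ j → μ i - ν i ≠ μ j - ν j) :
    ∀ i j k : Fin d, i < j → j < k →
      maxTwice (max (μ j + ν k) (μ k + ν j) + μ i)
               (max (μ i + ν k) (μ k + ν i) + μ j)
               (max (μ i + ν j) (μ j + ν i) + μ k) ∧
      maxTwice (max (μ j + ν k) (μ k + ν j) + ν i)
               (max (μ i + ν k) (μ k + ν i) + ν j)
               (max (μ i + ν j) (μ j + ν i) + ν k) := by
  intro i j k _ _
  unfold maxTwice
  rcases max_cases (μ j + ν k) (μ k + ν j) with ⟨e1, h1⟩ | ⟨e1, h1⟩ <;>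
  rcases max_cases (μ i + ν k) (μ k + ν i) with ⟨e2, h2⟩ | ⟨e2, h2⟩ <;>
  rcases max_cases (μ i + ν j) (μ j + ν i) with ⟨e3, h3⟩ | ⟨e3, h3⟩ <;>
  rw [e1, e2, e3] <;>
  refine ⟨?_, ?_⟩ <;>
  first
    | exact Or.inl ⟨by linarith, by linarith⟩
    | exact Or.inr (Or.inl ⟨by linarith, by linarith⟩)
    | exact Or.inr (Or.inr ⟨by linarith, by linarith⟩)
end

section
/- The map p: {i,j} ↦ max(μ_i + ν_j, μ_j + ν_i) (for i ≠ j in [d]) is a tropical Plücker vector: for every 1-subset σ = {s} and 3-subset τ = {t_1,t_2,t_3} of [d], the maximum of {p(σ∪{t_r}) + p(τ\{t_r}) : r = 1,2,3, t_r ∉ σ} is attained at least twice. -/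
lemma key (A B C D a b c d : ℝ) :
    maxTwice (max (A + b) (B + a) + max (C + d) (D + c))
      (max (A + c) (C + a) + max (B + d) (D + b))
      (max (A + d) (D + a) + max (B + c) (C + b)) := by
  unfold maxTwice
  simp only [max_def]
  split_ifs <;>
    first
      | (left; constructor <;> linarith)
      | (right; left; constructor <;> linarith)
      | (right; right; constructor <;> linarith)

/-- The map `p({i,j}) = max(μ_i+ν_j, μ_j+ν_i)` is a tropical Plücker vector:
for a 1-subset `σ = {s}` and a 3-subset `τ = {t₁,t₂,t₃}`, the maximum of
`p(σ∪{t_r}) + p(τ\{t_r})` over those `r` with `t_r ∉ σ` is attained at least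
twice (when `s ∈ τ` only two terms remain and they must be equal). -/
theorem stmt13 {d : ℕ} (μ ν : Fin d → ℝ) (s t₁ t₂ t₃ : Fin d)
    (h12 : t₁ ≠ t₂) (h13 : t₁ ≠ t₃) (h23 : t₂ ≠ t₃) :
    let p : Fin d → Fin d → ℝ := fun i j => max (μ i + ν j) (μ j + ν i)
    (s ≠ t₁ → s ≠ t₂ → s ≠ t₃ →
      maxTwice (p s t₁ + p t₂ t₃) (p s t₂ + p t₁ t₃) (p s t₃ + p t₁ t₂)) ∧
    (s = t₁ → p s t₂ + p t₁ t₃ = p s t₃ + p t₁ t₂) ∧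
    (s = t₂ → p s t₁ + p t₂ t₃ = p s t₃ + p t₁ t₂) ∧
    (s = t₃ → p s t₁ + p t₂ t₃ = p s t₂ + p t₁ t₃) := by
  intro p
  refine ⟨fun _ _ _ => key (μ s) (μ t₁) (μ t₂) (μ t₃) (ν s) (ν t₁) (ν t₂) (ν t₃),
    fun h => ?_, fun h => ?_, fun h => ?_⟩ <;> subst h <;>
    simp [p, max_comm, add_comm]
end

section
/- Let ε'_j = ε_j + ε_2·δ_{j,1} + ε_1·δ_{j,2} for j = 1,...,d (so ε'_1 = ε'_2 = ε_1 + ε_2 and ε'_j = ε_j for j ≥ 3), and let ε* be the second smallest value among ε'_1,...,ε'_d. If X = (μ_1+ε_1+ε_2, μ_2+ε_1+ε_2, ε_3,...,ε_d) and X' is defined by X'_i = μ_i·[i≤2] + min(ε*, ε'_i), then d_tr(X, X') = max_{1≤i≤d}(ε'_i) - ε*, and if the ε_j are i.i.d. N(0,σ), then E[d_tr(X,X')] ≤ 4σ√(2 log d). -/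
/-! The coordinates of `X - X'` are `max (ε'_i - ε*, 0)`; since `ε*` lies between the minimum
and the maximum of `ε'`, their spread is `max ε' - ε*`. In expectation,
`max ε' - ε* ≤ max ε' + max (-ε')`, and every `±ε'_i` is sub-Gaussian with variance proxy `2σ²`
(the two shifted coordinates are sums of two independent Gaussians), so Jensen's inequality for
`exp (t · max)` followed by a union bound gives `E[max] ≤ √(2 · 2σ² · log d) ≤ 2σ√(2 log d)`. -/

open MeasureTheory ProbabilityTheory

/-- `ε'_j = ε_j + ε₂·δ_{j,1} + ε₁·δ_{j,2}` (0-indexed). -/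
noncomputable def epsCor {d : ℕ} [NeZero d] (ε : Fin d → ℝ) : Fin d → ℝ := fun j =>
  ε j + (if j = 0 then ε 1 else 0) + (if j = 1 then ε 0 else 0)

open Real Finset
open scoped NNReal

theorem le_sqrt_of_forall_pos_mul_le {a c L : ℝ} (hc : 0 ≤ c)
    (h : ∀ t > 0, t * a ≤ L + c * t ^ 2 / 2) : a ≤ √(2 * c * L) := by
  rcases le_or_gt a 0 with ha | ha
  · exact ha.trans (sqrt_nonneg _)
  rcases hc.eq_or_lt with rfl | hc
  · have := h ((|L| + 1) / a) (by positivity)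
    rw [div_mul_cancel₀ _ ha.ne'] at this
    linarith [le_abs_self L]
  · refine le_sqrt_of_sq_le ?_
    have := h (a / c) (by positivity)
    field_simp at this
    nlinarith

theorem MeasureTheory.integrable_finset_sup' {Ω ι : Type*} [MeasurableSpace Ω] {μ : Measure Ω}
    {s : Finset ι} (hs : s.Nonempty) {Y : ι → Ω → ℝ} (hY : ∀ i ∈ s, Integrable (Y i) μ) :
    Integrable (fun ω => s.sup' hs (fun i => Y i ω)) μ :=
  (Finset.sup'_induction hs Y (p := fun f => Integrable f μ) (fun _ hf _ hg => hf.sup hg) hY).congr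
    (ae_of_all _ fun ω => Finset.sup'_apply hs Y ω)

section Tropical

variable {d : ℕ} [NeZero d]

theorem dtr_add_min_eq (m e : Fin d → ℝ) {s : ℝ} (hinf : univ.inf' univ_nonempty e ≤ s)
    (hsup : s ≤ univ.sup' univ_nonempty e) :
    dtr (fun i => m i + e i) (fun i => m i + min s (e i)) = univ.sup' univ_nonempty e - s := by
  have hdiff (i : Fin d) : m i + e i - (m i + min s (e i)) = max (e i - s) 0 := by
    rcases le_total (e i) s with h | h
    · rw [min_eq_right h, max_eq_right (by linarith)]; ring
    · rw [min_eq_left h, max_eq_left (by linarith)]; ring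
  obtain ⟨i, -, hi⟩ := exists_mem_eq_sup' univ_nonempty e
  obtain ⟨j, -, hj⟩ := exists_mem_eq_inf' univ_nonempty e
  have hmax : univ.sup' univ_nonempty (fun i => max (e i - s) 0) = univ.sup' univ_nonempty e - s :=
    le_antisymm
      (sup'_le _ _ fun k _ => max_le (by gcongr; exact le_sup' e (mem_univ k)) (by linarith))
      (by rw [hi]; exact (le_max_left _ _).trans (le_sup' (fun k => max (e k - s) 0) (mem_univ i)))
  have hmin : univ.inf' univ_nonempty (fun i => max (e i - s) 0) = 0 :=
    le_antisymm ((inf'_le _ (mem_univ j)).trans_eq (max_eq_right (by linarith)))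
      (le_inf' _ _ fun k _ => le_max_right _ _)
  simp only [dtr, hdiff, hmax, hmin, sub_zero]

variable (hne : (univ.filter (fun p : Fin d × Fin d => p.1 < p.2)).Nonempty) (e : Fin d → ℝ)

theorem inf'_le_secondMin : univ.inf' univ_nonempty e ≤ secondMin hne e :=
  le_inf' _ _ fun p _ => (inf'_le e (mem_univ p.1)).trans (le_max_left _ _)

theorem secondMin_le_sup' : secondMin hne e ≤ univ.sup' univ_nonempty e := by
  obtain ⟨p, hp⟩ := hne
  exact (inf'_le _ hp).trans (max_le (le_sup' e (mem_univ _)) (le_sup' e (mem_univ _)))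

theorem sup'_sub_secondMin_le :
    univ.sup' univ_nonempty e - secondMin hne e ≤
      univ.sup' univ_nonempty e + univ.sup' univ_nonempty (fun i => -e i) := by
  obtain ⟨i, -, hi⟩ := exists_mem_eq_inf' univ_nonempty e
  have : -e i ≤ univ.sup' univ_nonempty (fun i => -e i) := le_sup' (fun i => -e i) (mem_univ i)
  linarith [hi ▸ inf'_le_secondMin hne e]

end Tropical

namespace ProbabilityTheory

variable {Ω : Type*} [MeasurableSpace Ω] {μ : Measure Ω}

theorem HasSubgaussianMGF.mono {X : Ω → ℝ} {c c' : ℝ≥0} (h : HasSubgaussianMGF X c μ)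
    (hc : c ≤ c') : HasSubgaussianMGF X c' μ where
  integrable_exp_mul := h.integrable_exp_mul
  mgf_le t := (h.mgf_le t).trans (exp_le_exp.mpr (by gcongr))

theorem hasSubgaussianMGF_of_map_eq_gaussianReal [IsProbabilityMeasure μ] {X : Ω → ℝ}
    {v : ℝ≥0} (hX : μ.map X = gaussianReal 0 v) : HasSubgaussianMGF X v μ where
  integrable_exp_mul t := mgf_pos_iff.mp (by rw [mgf_gaussianReal hX]; exact exp_pos _)
  mgf_le t := by rw [mgf_gaussianReal hX, zero_mul, zero_add]

theorem integral_sup'_le_of_hasSubgaussianMGF [IsProbabilityMeasure μ] {ι : Type*}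
    [Fintype ι] [Nonempty ι] {Y : ι → Ω → ℝ} {c : ℝ≥0}
    (hY : ∀ i, HasSubgaussianMGF (Y i) c μ) :
    ∫ ω, univ.sup' univ_nonempty (fun i => Y i ω) ∂μ ≤
      √(2 * c * log (Fintype.card ι)) := by
  set M : Ω → ℝ := fun ω => univ.sup' univ_nonempty (fun i => Y i ω)
  have hM : Integrable M μ := integrable_finset_sup' _ fun i _ => (hY i).integrable
  have hexpM_le (t : ℝ) (ω : Ω) : exp (t * M ω) ≤ ∑ i, exp (t * Y i ω) := by
    obtain ⟨i, -, hi⟩ := exists_mem_eq_sup' univ_nonempty fun i => Y i ω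
    rw [show M ω = Y i ω from hi]
    exact single_le_sum (f := fun j => exp (t * Y j ω)) (fun j _ => (exp_pos _).le) (mem_univ i)
  refine le_sqrt_of_forall_pos_mul_le c.2 fun t ht => ?_
  have hsum : Integrable (fun ω => ∑ i, exp (t * Y i ω)) μ :=
    integrable_finsetSum _ fun i _ => (hY i).integrable_exp_mul t
  have hexpM : Integrable (fun ω => exp (t * M ω)) μ :=
    hsum.mono' (by fun_prop) (ae_of_all _ fun ω => by
      rw [norm_of_nonneg (exp_pos _).le]; exact hexpM_le t ω)
  have hcard : (0 : ℝ) < Fintype.card ι := by exact_mod_cast Fintype.card_pos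
  rw [← exp_le_exp, exp_add, exp_log hcard]
  calc exp (t * ∫ ω, M ω ∂μ) = exp (∫ ω, t * M ω ∂μ) := by rw [integral_const_mul]
    _ ≤ ∫ ω, exp (t * M ω) ∂μ :=
      convexOn_exp.map_integral_le continuous_exp.continuousOn isClosed_univ
        (ae_of_all _ fun _ => Set.mem_univ _) (hM.const_mul t) hexpM
    _ ≤ ∫ ω, ∑ i, exp (t * Y i ω) ∂μ := integral_mono hexpM hsum (hexpM_le t)
    _ = ∑ i, mgf (Y i) μ t := integral_finsetSum _ fun i _ => (hY i).integrable_exp_mul t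
    _ ≤ ∑ _i : ι, exp (c * t ^ 2 / 2) := sum_le_sum fun i _ => (hY i).mgf_le t
    _ = Fintype.card ι * exp (c * t ^ 2 / 2) := by simp

theorem hasSubgaussianMGF_epsCor {d : ℕ} [NeZero d] (h01 : (0 : Fin d) ≠ 1)
    {ε : Fin d → Ω → ℝ} {v : ℝ≥0} (hε : ∀ i, HasSubgaussianMGF (ε i) v μ)
    (hindep : ε 0 ⟂ᵢ[μ] ε 1) (i : Fin d) :
    HasSubgaussianMGF (fun ω => epsCor (fun j => ε j ω) i) (2 * v) μ := by
  have hsum : HasSubgaussianMGF (fun ω => ε 0 ω + ε 1 ω) (2 * v) μ := by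
    rw [two_mul]
    exact (hε 0).add_of_indepFun (hε 1) hindep
  by_cases h0 : i = 0
  · subst h0
    simpa [epsCor, h01] using hsum
  by_cases h1 : i = 1
  · subst h1
    simpa [epsCor, h01.symm, add_comm] using hsum
  · simpa [epsCor, h0, h1] using (hε i).mono (le_mul_of_one_le_left v.2 one_le_two)

theorem integral_sup'_sub_secondMin_le [IsProbabilityMeasure μ] {d : ℕ} [NeZero d]
    (hne : (univ.filter (fun p : Fin d × Fin d => p.1 < p.2)).Nonempty) {E : Ω → Fin d → ℝ}
    {c : ℝ≥0} (hE : ∀ i, HasSubgaussianMGF (fun ω => E ω i) c μ) :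
    ∫ ω, (univ.sup' univ_nonempty (E ω) - secondMin hne (E ω)) ∂μ ≤
      2 * √(2 * c * log d) := by
  have hmax := integral_sup'_le_of_hasSubgaussianMGF hE
  have hmin := integral_sup'_le_of_hasSubgaussianMGF fun i => (hE i).neg
  simp only [Fintype.card_fin, Pi.neg_apply] at hmax hmin
  have hint := integrable_finset_sup' univ_nonempty fun i _ => (hE i).integrable
  have hint' := integrable_finset_sup' univ_nonempty fun i _ => (hE i).neg.integrable
  simp only [Pi.neg_apply] at hint'
  calc _ ≤ ∫ ω, (univ.sup' univ_nonempty (E ω) + univ.sup' univ_nonempty (fun i => -E ω i)) ∂μ :=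
        integral_mono_of_nonneg (ae_of_all _ fun ω => sub_nonneg.2 (secondMin_le_sup' hne _))
          (hint.add hint') (ae_of_all _ fun ω => sup'_sub_secondMin_le hne (E ω))
    _ = ∫ ω, univ.sup' univ_nonempty (E ω) ∂μ +
          ∫ ω, univ.sup' univ_nonempty (fun i => -E ω i) ∂μ := integral_add hint hint'
    _ ≤ 2 * √(2 * c * log d) := by linarith

end ProbabilityTheory

theorem stmt19_general {Ω : Type*} [MeasurableSpace Ω] (μ : Measure Ω) [IsProbabilityMeasure μ]
    {d : ℕ} [NeZero d] (hd : 2 ≤ d) (σ : ℝ) (hσ : 0 < σ) (μ₁ μ₂ : ℝ)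
    (ε : Fin d → Ω → ℝ)
    (hindep : iIndepFun ε μ)
    (hdist : ∀ i, Measure.map (ε i) μ = gaussianReal 0 ((σ ^ 2).toNNReal))
    (hne : (Finset.univ.filter (fun p : Fin d × Fin d => p.1 < p.2)).Nonempty) :
    (∀ ω : Ω,
      dtr (fun i => meanVec μ₁ μ₂ i + epsCor (fun j => ε j ω) i)
          (fun i => meanVec μ₁ μ₂ i +
            min (secondMin hne (epsCor (fun j => ε j ω))) (epsCor (fun j => ε j ω) i)) =
        Finset.univ.sup' Finset.univ_nonempty (epsCor (fun j => ε j ω)) -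
          secondMin hne (epsCor (fun j => ε j ω))) ∧
    (∫ ω, dtr (fun i => meanVec μ₁ μ₂ i + epsCor (fun j => ε j ω) i)
          (fun i => meanVec μ₁ μ₂ i +
            min (secondMin hne (epsCor (fun j => ε j ω))) (epsCor (fun j => ε j ω) i)) ∂μ ≤
      4 * σ * Real.sqrt (2 * Real.log d)) := by
  set E : Ω → Fin d → ℝ := fun ω => epsCor (fun j => ε j ω)
  have h01 : (0 : Fin d) ≠ 1 := by simp [Fin.ext_iff, Nat.mod_eq_of_lt hd]
  have hE : ∀ i, HasSubgaussianMGF (fun ω => E ω i) (2 * (σ ^ 2).toNNReal) μ :=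
    hasSubgaussianMGF_epsCor h01 (fun i => hasSubgaussianMGF_of_map_eq_gaussianReal (hdist i))
      (hindep.indepFun h01)
  have hdtr (ω : Ω) := dtr_add_min_eq (meanVec μ₁ μ₂) (E ω) (inf'_le_secondMin hne (E ω))
    (secondMin_le_sup' hne (E ω))
  refine ⟨hdtr, ?_⟩
  have hlog : 0 ≤ log d := log_natCast_nonneg d
  calc ∫ ω, dtr _ _ ∂μ = ∫ ω, (univ.sup' univ_nonempty (E ω) - secondMin hne (E ω)) ∂μ :=
        integral_congr_ae (ae_of_all _ hdtr)
    _ ≤ 2 * √(2 * ↑(2 * (σ ^ 2).toNNReal) * log d) := integral_sup'_sub_secondMin_le hne hE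
    _ = 4 * σ * √(log d) := by
        rw [show 2 * ↑(2 * (σ ^ 2).toNNReal) * log d = (2 * σ) ^ 2 * log d by
          push_cast [Real.coe_toNNReal _ (sq_nonneg σ)]; ring, sqrt_mul' _ hlog,
          sqrt_sq (by positivity)]
        ring
    _ ≤ 4 * σ * √(2 * log d) := by gcongr; linarith

/-- For `X = (μ₁+ε₁+ε₂, μ₂+ε₁+ε₂, ε₃,…,ε_d)` and
`X'_i = μ_i·[i≤2] + min(ε*, ε'_i)` with `ε'` as in `epsCor` and `ε*` the second
smallest of the `ε'_j`, we have `d_tr(X,X') = max_i ε'_i - ε*`; and if the `ε_j`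
are i.i.d. `N(0,σ²)`, then `E[d_tr(X,X')] ≤ 4σ√(2 log d)`. -/
theorem stmt19 {Ω : Type*} [MeasurableSpace Ω] (μ : Measure Ω) [IsProbabilityMeasure μ]
    {d : ℕ} [NeZero d] (hd : 2 ≤ d) (σ : ℝ) (hσ : 0 < σ) (μ₁ μ₂ : ℝ)
    (ε : Fin d → Ω → ℝ) (hmeas : ∀ i, Measurable (ε i))
    (hindep : iIndepFun ε μ)
    (hdist : ∀ i, Measure.map (ε i) μ = gaussianReal 0 ((σ ^ 2).toNNReal))
    (hne : (Finset.univ.filter (fun p : Fin d × Fin d => p.1 < p.2)).Nonempty) :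
    (∀ ω : Ω,
      dtr (fun i => meanVec μ₁ μ₂ i + epsCor (fun j => ε j ω) i)
          (fun i => meanVec μ₁ μ₂ i +
            min (secondMin hne (epsCor (fun j => ε j ω))) (epsCor (fun j => ε j ω) i)) =
        Finset.univ.sup' Finset.univ_nonempty (epsCor (fun j => ε j ω)) -
          secondMin hne (epsCor (fun j => ε j ω))) ∧
    (∫ ω, dtr (fun i => meanVec μ₁ μ₂ i + epsCor (fun j => ε j ω) i)
          (fun i => meanVec μ₁ μ₂ i +
            min (secondMin hne (epsCor (fun j => ε j ω))) (epsCor (fun j => ε j ω) i)) ∂μ ≤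
      4 * σ * Real.sqrt (2 * Real.log d)) :=
  stmt19_general μ hd σ hσ μ₁ μ₂ ε hindep hdist hne
end
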